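/- Let Γ be a countable dense subgroup of a locally compact second countable group G with left Haar measure m_G. Assume the left translation action Γ ↷ (G, m_G) has local spectral gap with respect to some compact set B₀ ⊂ G with non-empty interior. Then for every compact set K ⊂ G there exist a finite set F ⊂ Γ and a constant κ > 0 such that sup_{g∈K} ‖λ(g)φ − φ‖₂ ≤ κ·max_{g∈F} ‖λ(g)φ − φ‖₂ for every φ ∈ L²(G, m_G). -/

import Mathlib

/-!
Right translations commute with the left regular representation, so the local spectral gap on
`B₀` yields, with the same `F` and `κ`, a local Poincaré inequality on every right translate
`B₀ s`: on `B₀ s` the function `φ` is `κ · max_{γ ∈ F} ‖λ(γ)φ - φ‖` close to a constant. For `u`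
near `1`, `B₀ ∩ u B₀` contains a fixed nonempty open set `V`; comparing `φ` and `λ(u)φ` with the
same constant on `B₀ s ∩ u B₀ s` and integrating over `s` gives
`m(V) ‖λ(u)φ - φ‖² ≤ 4 κ² m(B₀) ∑_{γ ∈ F} ‖λ(γ)φ - φ‖²`.
Finally `K` is covered by finitely many `γ U` with `γ ∈ Γ` by density, and
`λ(γ u)φ - φ = λ(γ)(λ(u)φ - φ) + (λ(γ)φ - φ)`.
-/

open MeasureTheory NNReal ENNReal Filter Topology

noncomputable section

def HasLocalSpectralGap {G : Type} [Group G] [MeasurableSpace G] (Γ : Subgroup G)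
    (m : Measure G) (B : Set G) : Prop :=
  ∃ (F : Finset Γ) (κ : ℝ≥0), 0 < κ ∧
    ∀ φ : G → ℂ, MemLp φ 2 m → (∫ x in B, φ x ∂m) = 0 →
      eLpNorm φ 2 (m.restrict B) ≤ (κ : ℝ≥0∞) *
        F.sup fun γ => eLpNorm (fun x => φ ((γ : G)⁻¹ * x) - φ x) 2 (m.restrict B)

theorem eLpNorm_two_sq_eq_lintegral {α ε : Type*} [MeasurableSpace α] [ENorm ε]
    (f : α → ε) (μ : Measure α) : eLpNorm f 2 μ ^ 2 = ∫⁻ x, ‖f x‖ₑ ^ 2 ∂μ := by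
  simpa using eLpNorm_nnreal_pow_eq_lintegral (f := f) (μ := μ) (p := 2) two_ne_zero

theorem ENNReal.finset_sup_sq_le_sum {ι : Type*} (F : Finset ι) (f : ι → ℝ≥0∞) :
    F.sup f ^ 2 ≤ ∑ i ∈ F, f i ^ 2 := by
  rw [Finset.apply_sup_eq_sup_comp_of_linearOrder (· ^ 2) (fun _ _ h => pow_le_pow_left' h 2)
    (by simp)]
  exact Finset.sup_le fun i hi => Finset.single_le_sum (f := fun i => f i ^ 2)
    (fun _ _ => zero_le) hi

theorem ENNReal.mul_finset_sup {ι : Type*} (a : ℝ≥0∞) (F : Finset ι) (f : ι → ℝ≥0∞) :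
    a * F.sup f = F.sup fun i => a * f i :=
  Finset.apply_sup_eq_sup_comp_of_linearOrder (a * ·) (fun _ _ h => mul_le_mul_right h a)
    (mul_zero a)

section Translation

variable {G : Type*} [Group G] [MeasurableSpace G] {m : Measure G}

theorem MeasureTheory.AEStronglyMeasurable.comp_mul_left [MeasurableMul G]
    [m.IsMulLeftInvariant] {β : Type*} [TopologicalSpace β] {f : G → β}
    (hf : AEStronglyMeasurable f m) (g : G) : AEStronglyMeasurable (fun x => f (g * x)) m :=
  hf.comp_quasiMeasurePreserving (measurePreserving_mul_left m g).quasiMeasurePreserving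

variable {ε : Type*} [TopologicalSpace ε] [ContinuousENorm ε] {p : ℝ≥0∞}

theorem eLpNorm_restrict_comp_mul_left [MeasurableMul G] [m.IsMulLeftInvariant] (f : G → ε)
    (g : G) (A : Set G) :
    eLpNorm (fun x => f (g * x)) p (m.restrict ((g * ·) ⁻¹' A)) = eLpNorm f p (m.restrict A) := by
  let e := MeasurableEquiv.mulLeft g
  rw [show (fun x => f (g * x)) = f ∘ e from rfl, ← e.measurableEmbedding.eLpNorm_map_measure,
    show ((g * ·) ⁻¹' A) = e ⁻¹' A from rfl, ← e.restrict_map, show ⇑e = (g * ·) from rfl,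
    map_mul_left_eq_self]

variable [TopologicalSpace G] [IsTopologicalGroup G] [LocallyCompactSpace G] [BorelSpace G]
  [m.IsHaarMeasure] [m.InnerRegular]

theorem MeasureTheory.MemLp.comp_mul_right {f : G → ε} (hf : MemLp f p m) (s : G) :
    MemLp (fun x => f (x * s)) p m := by
  have := hf.smul_measure (c := (Measure.modularCharacterFun s : ℝ≥0∞)) ENNReal.coe_ne_top
  rw [← ENNReal.smul_def, ← Measure.map_right_mul_eq_modularCharacterFun_smul] at this
  exact (MeasurableEquiv.mulRight s).memLp_map_measure_iff.1 this

theorem eLpNorm_restrict_comp_mul_right (hp : p ≠ ∞) (f : G → ε) (s : G) (B : Set G) :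
    eLpNorm (fun x => f (x * s)) p (m.restrict B) =
      (Measure.modularCharacterFun s : ℝ≥0∞) ^ (1 / p).toReal *
        eLpNorm f p (m.restrict ((· * s⁻¹) ⁻¹' B)) := by
  let e := MeasurableEquiv.mulRight s
  have hB : e ⁻¹' ((· * s⁻¹) ⁻¹' B) = B := by ext x; simp [e]
  conv_lhs => rw [← hB]
  rw [show (fun x => f (x * s)) = f ∘ e from rfl, ← e.measurableEmbedding.eLpNorm_map_measure,
    ← e.restrict_map, show ⇑e = (· * s) from rfl,
    Measure.map_right_mul_eq_modularCharacterFun_smul, Measure.restrict_smul, ENNReal.smul_def,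
    eLpNorm_smul_measure_of_ne_top hp, smul_eq_mul]

end Translation

theorem lintegral_lintegral_restrict_preimage_mul_right {G : Type*} [Group G] [MeasurableSpace G]
    [MeasurableMul₂ G] {m : Measure G} [SFinite m] [m.IsMulLeftInvariant] {C : Set G}
    (hC : MeasurableSet C) {f : G → ℝ≥0∞} (hf : AEMeasurable f m) :
    ∫⁻ s, ∫⁻ x in (· * s) ⁻¹' C, f x ∂m ∂m = m C * ∫⁻ x, f x ∂m := by
  have hind : Measurable (C.indicator fun _ => (1 : ℝ≥0∞)) := measurable_const.indicator hC
  calc ∫⁻ s, ∫⁻ x in (· * s) ⁻¹' C, f x ∂m ∂m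
      = ∫⁻ s, ∫⁻ x, C.indicator (fun _ => 1) (x * s) * f x ∂m ∂m := by
        congr 1; funext s
        rw [← lintegral_indicator (measurable_mul_const s hC)]
        congr 1; funext x
        by_cases hx : x * s ∈ C <;> simp [hx]
    _ = ∫⁻ x, ∫⁻ s, C.indicator (fun _ => 1) (x * s) * f x ∂m ∂m :=
        lintegral_lintegral_swap
          ((hind.comp (measurable_snd.mul measurable_fst)).aemeasurable.mul hf.comp_snd)
    _ = ∫⁻ x, m C * f x ∂m := by
        congr 1; funext x
        rw [lintegral_mul_const (f := fun s => C.indicator (fun _ => 1) (x * s)) _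
            (hind.comp (measurable_const_mul x)),
          lintegral_indicator_const_comp (measurable_const_mul x) hC, one_mul,
          measure_preimage_mul, mul_comm]
    _ = m C * ∫⁻ x, f x ∂m := lintegral_const_mul'' _ hf

theorem exists_isOpen_one_mem_subset_inter_preimage_mul_left {G : Type*} [Group G]
    [TopologicalSpace G] [IsTopologicalGroup G] {B : Set G} (hB : (interior B).Nonempty) :
    ∃ U V : Set G, IsOpen U ∧ (1 : G) ∈ U ∧ IsOpen V ∧ V.Nonempty ∧
      ∀ u ∈ U, V ⊆ B ∩ (u⁻¹ * ·) ⁻¹' B := by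
  obtain ⟨x₀, hx₀⟩ := hB
  have hO : IsOpen ((fun p : G × G => p.1⁻¹ * p.2) ⁻¹' interior B) :=
    isOpen_interior.preimage (by fun_prop)
  obtain ⟨U, V, hU, hV, h1U, hx₀V, hUV⟩ := isOpen_prod_iff.1 hO 1 x₀ (by simpa using hx₀)
  have hmem : ∀ u ∈ U, ∀ v ∈ V, u⁻¹ * v ∈ B := fun u hu v hv =>
    interior_subset (hUV (Set.mk_mem_prod hu hv))
  exact ⟨U, V, hU, h1U, hV, ⟨x₀, hx₀V⟩, fun u hu v hv =>
    ⟨by simpa using hmem 1 h1U v hv, hmem u hu v hv⟩⟩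

theorem eLpNorm_comp_mul_left_sub_le {G : Type*} [Group G] [MeasurableSpace G] [MeasurableMul G]
    {m : Measure G} [m.IsMulLeftInvariant] {E : Type*} [NormedAddCommGroup E] {φ : G → E}
    (hφ : AEStronglyMeasurable φ m) {p : ℝ≥0∞} (hp : 1 ≤ p) (g h : G) :
    eLpNorm (fun x => φ ((g * h)⁻¹ * x) - φ x) p m ≤
      eLpNorm (fun x => φ (h⁻¹ * x) - φ x) p m + eLpNorm (fun x => φ (g⁻¹ * x) - φ x) p m := by
  have htr (k : G) : AEStronglyMeasurable (fun x => φ (k⁻¹ * x) - φ x) m :=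
    (hφ.comp_mul_left k⁻¹).sub hφ
  calc eLpNorm (fun x => φ ((g * h)⁻¹ * x) - φ x) p m
      = eLpNorm ((fun x => φ (h⁻¹ * x) - φ x) ∘ (g⁻¹ * ·) + fun x => φ (g⁻¹ * x) - φ x) p m := by
        congr 1; funext x; simp [mul_assoc]
    _ ≤ eLpNorm ((fun x => φ (h⁻¹ * x) - φ x) ∘ (g⁻¹ * ·)) p m +
          eLpNorm (fun x => φ (g⁻¹ * x) - φ x) p m :=
        eLpNorm_add_le ((htr h).comp_mul_left g⁻¹) (htr g) hp
    _ = eLpNorm (fun x => φ (h⁻¹ * x) - φ x) p m + eLpNorm (fun x => φ (g⁻¹ * x) - φ x) p m := by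
        rw [eLpNorm_comp_measurePreserving (htr h) (measurePreserving_mul_left m g⁻¹)]

theorem IsCompact.exists_finset_inv_mul_mem_of_dense {G : Type*} [Group G] [TopologicalSpace G]
    [IsTopologicalGroup G] {K : Set G} (hK : IsCompact K) {Γ : Subgroup G}
    (hΓ : Dense (Γ : Set G)) {U : Set G} (hU : IsOpen U) (h1U : (1 : G) ∈ U) :
    ∃ S : Finset Γ, ∀ g ∈ K, ∃ γ ∈ S, (γ : G)⁻¹ * g ∈ U := by
  obtain ⟨S, hS⟩ := hK.elim_finite_subcover (fun γ : Γ => ((γ : G)⁻¹ * ·) ⁻¹' U)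
    (fun γ => hU.preimage (continuous_const_mul _)) fun g _ => by
      obtain ⟨γ, hγ, hγg⟩ := hΓ.exists_mem_open (hU.preimage (by fun_prop : Continuous
        fun k : G => k⁻¹ * g)) ⟨g, by simpa using h1U⟩
      exact Set.mem_iUnion.2 ⟨⟨γ, hγ⟩, hγg⟩
  exact ⟨S, fun g hg => by simpa using hS hg⟩

def LocalPoincare {G : Type*} [Group G] [MeasurableSpace G] (Γ : Subgroup G) (m : Measure G)
    (B : Set G) (F : Finset Γ) (κ : ℝ≥0) : Prop :=
  ∀ φ : G → ℂ, MemLp φ 2 m → ∃ c : ℂ, eLpNorm (fun x => φ x - c) 2 (m.restrict B) ≤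
    κ * F.sup fun γ => eLpNorm (fun x => φ ((γ : G)⁻¹ * x) - φ x) 2 (m.restrict B)

theorem HasLocalSpectralGap.exists_localPoincare {G : Type} [Group G] [MeasurableSpace G]
    [MeasurableMul G] {Γ : Subgroup G} {m : Measure G} [m.IsMulLeftInvariant] {B : Set G}
    (h : HasLocalSpectralGap Γ m B) (hB : MeasurableSet B) (hBtop : m B ≠ ∞) :
    ∃ F κ, LocalPoincare Γ m B F κ := by
  obtain ⟨F, κ, -, hgap⟩ := h
  refine ⟨F, κ, fun φ hφ => ⟨⨍ x in B, φ x ∂m, ?_⟩⟩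
  set c := ⨍ x in B, φ x ∂m
  -- `φ - c` need not be square integrable, so `c` is only subtracted on a set of finite measure
  -- that contains `B` and all `γ⁻¹ B`, `γ ∈ F`.
  set B' := B ∪ ⋃ γ ∈ F, ((γ : G) * ·) ⁻¹' B
  have hB' : MeasurableSet B' :=
    hB.union (F.measurableSet_biUnion fun γ _ => measurable_const_mul _ hB)
  have hB'top : m B' ≠ ∞ := by
    refine (measure_union_lt_top hBtop.lt_top (measure_biUnion_lt_top F.finite_toSet
      fun γ _ => ?_)).ne
    rw [measure_preimage_mul]
    exact hBtop.lt_top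
  set χ : G → ℂ := fun x => φ x - B'.indicator (fun _ => c) x
  have hBB' : B ⊆ B' := Set.subset_union_left
  have hχ : ∀ x ∈ B, χ x = φ x - c := fun x hx => by
    simp only [χ, Set.indicator_of_mem (hBB' hx)]
  have hχγ : ∀ γ ∈ F, ∀ x ∈ B, χ ((γ : G)⁻¹ * x) - χ x = φ ((γ : G)⁻¹ * x) - φ x := by
    intro γ hγ x hx
    have hγx : (γ : G)⁻¹ * x ∈ B' :=
      Set.mem_union_right _ (Set.mem_biUnion hγ (by simpa using hx))
    simp only [χ, Set.indicator_of_mem hγx, Set.indicator_of_mem (hBB' hx)]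
    ring
  have hχ_mean : ∫ x in B, χ x ∂m = 0 := by
    rw [setIntegral_congr_fun hB hχ]
    exact setAverage_sub_setAverage hBtop φ
  calc eLpNorm (fun x => φ x - c) 2 (m.restrict B) = eLpNorm χ 2 (m.restrict B) :=
        eLpNorm_congr_ae ((ae_restrict_mem hB).mono fun x hx => (hχ x hx).symm)
    _ ≤ κ * F.sup fun γ => eLpNorm (fun x => χ ((γ : G)⁻¹ * x) - χ x) 2 (m.restrict B) :=
        hgap χ (hφ.sub (memLp_indicator_const 2 hB' c (Or.inr hB'top))) hχ_mean
    _ = κ * F.sup fun γ => eLpNorm (fun x => φ ((γ : G)⁻¹ * x) - φ x) 2 (m.restrict B) := by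
        congr 1
        refine Finset.sup_congr rfl fun γ hγ => eLpNorm_congr_ae ?_
        exact (ae_restrict_mem hB).mono (hχγ γ hγ)

namespace LocalPoincare

variable {G : Type*} [Group G] [MeasurableSpace G] {m : Measure G} {Γ : Subgroup G}
  {F : Finset Γ} {κ : ℝ≥0}

theorem lintegral_inter_preimage_mul_left_le [MeasurableMul G] [m.IsMulLeftInvariant] {A : Set G}
    (h : LocalPoincare Γ m A F κ) {φ : G → ℂ} (hφ : MemLp φ 2 m) (u : G) :
    ∫⁻ x in A ∩ (u⁻¹ * ·) ⁻¹' A, ‖φ (u⁻¹ * x) - φ x‖ₑ ^ 2 ∂m ≤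
      4 * κ ^ 2 * ∫⁻ x in A, ∑ γ ∈ F, ‖φ ((γ : G)⁻¹ * x) - φ x‖ₑ ^ 2 ∂m := by
  obtain ⟨c, hc⟩ := h φ hφ
  set S := F.sup fun γ => eLpNorm (fun x => φ ((γ : G)⁻¹ * x) - φ x) 2 (m.restrict A)
  set A' := A ∩ (u⁻¹ * ·) ⁻¹' A
  have hle : eLpNorm (fun x => φ (u⁻¹ * x) - φ x) 2 (m.restrict A') ≤ 2 * (κ * S) :=
    calc eLpNorm (fun x => φ (u⁻¹ * x) - φ x) 2 (m.restrict A')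
        = eLpNorm ((fun x => φ (u⁻¹ * x) - c) - fun x => φ x - c) 2 (m.restrict A') := by
          congr 1; funext x; simp
      _ ≤ eLpNorm (fun x => φ (u⁻¹ * x) - c) 2 (m.restrict A') +
            eLpNorm (fun x => φ x - c) 2 (m.restrict A') :=
          eLpNorm_sub_le ((hφ.1.comp_mul_left _).sub aestronglyMeasurable_const).restrict
            (hφ.1.sub aestronglyMeasurable_const).restrict one_le_two
      _ ≤ eLpNorm (fun x => φ (u⁻¹ * x) - c) 2 (m.restrict ((u⁻¹ * ·) ⁻¹' A)) +
            eLpNorm (fun x => φ x - c) 2 (m.restrict A) :=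
          add_le_add (eLpNorm_mono_measure _ (Measure.restrict_mono Set.inter_subset_right le_rfl))
            (eLpNorm_mono_measure _ (Measure.restrict_mono Set.inter_subset_left le_rfl))
      _ = 2 * eLpNorm (fun x => φ x - c) 2 (m.restrict A) := by
          rw [eLpNorm_restrict_comp_mul_left (fun x => φ x - c), two_mul]
      _ ≤ 2 * (κ * S) := by gcongr
  calc ∫⁻ x in A', ‖φ (u⁻¹ * x) - φ x‖ₑ ^ 2 ∂m
      = eLpNorm (fun x => φ (u⁻¹ * x) - φ x) 2 (m.restrict A') ^ 2 :=
        (eLpNorm_two_sq_eq_lintegral _ _).symm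
    _ ≤ (2 * (κ * S)) ^ 2 := pow_le_pow_left' hle 2
    _ = 4 * κ ^ 2 * S ^ 2 := by ring
    _ ≤ 4 * κ ^ 2 * ∑ γ ∈ F, eLpNorm (fun x => φ ((γ : G)⁻¹ * x) - φ x) 2 (m.restrict A) ^ 2 := by
        gcongr
        exact ENNReal.finset_sup_sq_le_sum F _
    _ = 4 * κ ^ 2 * ∫⁻ x in A, ∑ γ ∈ F, ‖φ ((γ : G)⁻¹ * x) - φ x‖ₑ ^ 2 ∂m := by
        rw [lintegral_finsetSum' (f := fun (γ : Γ) x => ‖φ ((γ : G)⁻¹ * x) - φ x‖ₑ ^ 2) _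
          fun γ _ => (((hφ.1.comp_mul_left _).sub hφ.1).enorm.pow_const 2).restrict]
        simp_rw [eLpNorm_two_sq_eq_lintegral]

theorem preimage_mul_right [TopologicalSpace G] [IsTopologicalGroup G] [LocallyCompactSpace G]
    [BorelSpace G] [m.IsHaarMeasure] [m.InnerRegular] {B : Set G} (h : LocalPoincare Γ m B F κ)
    (s : G) : LocalPoincare Γ m ((· * s) ⁻¹' B) F κ := by
  intro φ hφ
  obtain ⟨c, hc⟩ := h (fun x => φ (x * s⁻¹)) (hφ.comp_mul_right s⁻¹)
  refine ⟨c, ?_⟩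
  set Δ := (Measure.modularCharacterFun s⁻¹ : ℝ≥0∞) ^ (1 / (2 : ℝ≥0∞)).toReal
  have hΔ0 : Δ ≠ 0 := (ENNReal.rpow_pos (ENNReal.coe_pos.2 (Measure.modularCharacterFun_pos _))
    ENNReal.coe_ne_top).ne'
  have hΔtop : Δ ≠ ∞ := ENNReal.rpow_ne_top_of_nonneg ENNReal.toReal_nonneg ENNReal.coe_ne_top
  have transport (f : G → ℂ) : eLpNorm (fun x => f (x * s⁻¹)) 2 (m.restrict B) =
      Δ * eLpNorm f 2 (m.restrict ((· * s) ⁻¹' B)) := by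
    rw [eLpNorm_restrict_comp_mul_right ENNReal.ofNat_ne_top, inv_inv]
  rw [← ENNReal.mul_le_mul_iff_right hΔ0 hΔtop, ← transport fun x => φ x - c, mul_left_comm,
    ENNReal.mul_finset_sup]
  simp_rw [← transport]
  simpa only [mul_assoc] using hc

variable [TopologicalSpace G] [IsTopologicalGroup G] [LocallyCompactSpace G]
  [SecondCountableTopology G] [BorelSpace G] [m.IsHaarMeasure] {B : Set G}

theorem measure_inter_mul_lintegral_le (h : LocalPoincare Γ m B F κ) (hB : MeasurableSet B)
    {φ : G → ℂ} (hφ : MemLp φ 2 m) (u : G) :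
    m (B ∩ (u⁻¹ * ·) ⁻¹' B) * ∫⁻ x, ‖φ (u⁻¹ * x) - φ x‖ₑ ^ 2 ∂m ≤
      4 * κ ^ 2 * m B * ∫⁻ x, ∑ γ ∈ F, ‖φ ((γ : G)⁻¹ * x) - φ x‖ₑ ^ 2 ∂m := by
  have htr (g : G) : AEMeasurable (fun x => ‖φ (g * x) - φ x‖ₑ ^ 2) m :=
    ((hφ.1.comp_mul_left g).sub hφ.1).enorm.pow_const 2
  calc m (B ∩ (u⁻¹ * ·) ⁻¹' B) * ∫⁻ x, ‖φ (u⁻¹ * x) - φ x‖ₑ ^ 2 ∂m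
      = ∫⁻ s, ∫⁻ x in (· * s) ⁻¹' (B ∩ (u⁻¹ * ·) ⁻¹' B), ‖φ (u⁻¹ * x) - φ x‖ₑ ^ 2 ∂m ∂m :=
        (lintegral_lintegral_restrict_preimage_mul_right
          (hB.inter (measurable_const_mul _ hB)) (htr _)).symm
    _ ≤ ∫⁻ s, 4 * κ ^ 2 *
          ∫⁻ x in (· * s) ⁻¹' B, ∑ γ ∈ F, ‖φ ((γ : G)⁻¹ * x) - φ x‖ₑ ^ 2 ∂m ∂m := by
        refine lintegral_mono fun s => ?_
        have hset : (· * s) ⁻¹' (B ∩ (u⁻¹ * ·) ⁻¹' B) =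
            (· * s) ⁻¹' B ∩ (u⁻¹ * ·) ⁻¹' ((· * s) ⁻¹' B) := by
          ext x; simp [mul_assoc]
        rw [hset]
        exact (h.preimage_mul_right s).lintegral_inter_preimage_mul_left_le hφ u
    _ = 4 * κ ^ 2 * m B * ∫⁻ x, ∑ γ ∈ F, ‖φ ((γ : G)⁻¹ * x) - φ x‖ₑ ^ 2 ∂m := by
        rw [lintegral_const_mul' _ _ (by finiteness),
          lintegral_lintegral_restrict_preimage_mul_right
            (f := fun x => ∑ γ ∈ F, ‖φ ((γ : G)⁻¹ * x) - φ x‖ₑ ^ 2) hB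
            (Finset.aemeasurable_fun_sum _ fun γ _ => htr _), mul_assoc (4 * _)]

theorem exists_isOpen_one_mem_eLpNorm_le (h : LocalPoincare Γ m B F κ) (hB : MeasurableSet B)
    (hBtop : m B ≠ ∞) (hBint : (interior B).Nonempty) :
    ∃ U : Set G, IsOpen U ∧ (1 : G) ∈ U ∧ ∃ D : ℝ≥0, ∀ φ : G → ℂ, MemLp φ 2 m → ∀ u ∈ U,
      eLpNorm (fun x => φ (u⁻¹ * x) - φ x) 2 m ≤
        D * F.sup fun γ => eLpNorm (fun x => φ ((γ : G)⁻¹ * x) - φ x) 2 m := by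
  obtain ⟨U, V, hU, h1U, hV, hVne, hUV⟩ :=
    exists_isOpen_one_mem_subset_inter_preimage_mul_left hBint
  have hV0 : m V ≠ 0 := (hV.measure_pos m hVne).ne'
  have hVtop : m V ≠ ∞ :=
    ne_top_of_le_ne_top hBtop (measure_mono ((hUV 1 h1U).trans Set.inter_subset_left))
  set M : ℝ≥0∞ := (m V)⁻¹ * (4 * κ ^ 2 * m B * F.card)
  have hM : M ≠ ∞ := by finiteness
  refine ⟨U, hU, h1U, NNReal.sqrt M.toNNReal, fun φ hφ u hu => ?_⟩
  set S := F.sup fun γ => eLpNorm (fun x => φ ((γ : G)⁻¹ * x) - φ x) 2 m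
  have hsum : ∫⁻ x, ∑ γ ∈ F, ‖φ ((γ : G)⁻¹ * x) - φ x‖ₑ ^ 2 ∂m ≤ F.card * S ^ 2 := by
    rw [lintegral_finsetSum' (f := fun (γ : Γ) x => ‖φ ((γ : G)⁻¹ * x) - φ x‖ₑ ^ 2) _
      fun γ _ => ((hφ.1.comp_mul_left _).sub hφ.1).enorm.pow_const 2, ← nsmul_eq_mul]
    simp_rw [← eLpNorm_two_sq_eq_lintegral]
    exact Finset.sum_le_card_nsmul _ _ _ fun γ hγ => pow_le_pow_left' (Finset.le_sup
      (f := fun γ : Γ => eLpNorm (fun x => φ ((γ : G)⁻¹ * x) - φ x) 2 m) hγ) 2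
  have hsq : eLpNorm (fun x => φ (u⁻¹ * x) - φ x) 2 m ^ 2 ≤ (NNReal.sqrt M.toNNReal * S) ^ 2 := by
    rw [mul_pow, ← ENNReal.coe_pow, NNReal.sq_sqrt, ENNReal.coe_toNNReal hM,
      eLpNorm_two_sq_eq_lintegral]
    calc ∫⁻ x, ‖φ (u⁻¹ * x) - φ x‖ₑ ^ 2 ∂m
        = (m V)⁻¹ * (m V * ∫⁻ x, ‖φ (u⁻¹ * x) - φ x‖ₑ ^ 2 ∂m) := by
          rw [← mul_assoc, ENNReal.inv_mul_cancel hV0 hVtop, one_mul]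
      _ ≤ (m V)⁻¹ * (m (B ∩ (u⁻¹ * ·) ⁻¹' B) * ∫⁻ x, ‖φ (u⁻¹ * x) - φ x‖ₑ ^ 2 ∂m) := by
          gcongr
          exact hUV u hu
      _ ≤ (m V)⁻¹ * (4 * κ ^ 2 * m B * (F.card * S ^ 2)) :=
          mul_le_mul_right ((h.measure_inter_mul_lintegral_le hB hφ u).trans (by gcongr)) _
      _ = M * S ^ 2 := by ring
  exact (ENNReal.pow_le_pow_left_iff two_ne_zero).1 hsq

end LocalPoincare

theorem uniform_almost_invariance_of_local_spectral_gap_general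
    (G : Type) [Group G] [TopologicalSpace G] [IsTopologicalGroup G]
    [LocallyCompactSpace G] [SecondCountableTopology G]
    [MeasurableSpace G] [BorelSpace G]
    (mG : Measure G) [mG.IsHaarMeasure]
    (Γ : Subgroup G) (hdense : Dense (Γ : Set G))
    (B₀ : Set G) (hB₀meas : MeasurableSet B₀) (hB₀comp : IsCompact B₀)
    (hB₀int : (interior B₀).Nonempty)
    (hlsg : HasLocalSpectralGap Γ mG B₀)
    (K : Set G) (hK : IsCompact K) :
    ∃ (F : Finset Γ) (κ : ℝ≥0), 0 < κ ∧
      ∀ φ : G → ℂ, MemLp φ 2 mG → ∀ g ∈ K,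
        eLpNorm (fun x => φ (g⁻¹ * x) - φ x) 2 mG ≤ (κ : ℝ≥0∞) *
          F.sup fun γ => eLpNorm (fun x => φ ((γ : G)⁻¹ * x) - φ x) 2 mG := by
  classical
  have hB₀top : mG B₀ ≠ ∞ := hB₀comp.measure_lt_top.ne
  obtain ⟨F₀, κ₀, hP⟩ := hlsg.exists_localPoincare hB₀meas hB₀top
  obtain ⟨U, hU, h1U, D, hD⟩ := hP.exists_isOpen_one_mem_eLpNorm_le hB₀meas hB₀top hB₀int
  obtain ⟨S, hS⟩ := hK.exists_finset_inv_mul_mem_of_dense hdense hU h1U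
  refine ⟨F₀ ∪ S, D + 1, add_pos_of_nonneg_of_pos D.2 one_pos, fun φ hφ g hg => ?_⟩
  obtain ⟨γ, hγS, hγg⟩ := hS g hg
  set e : G → ℝ≥0∞ := fun k => eLpNorm (fun x => φ (k⁻¹ * x) - φ x) 2 mG
  calc e g = e (γ * ((γ : G)⁻¹ * g)) := by rw [mul_inv_cancel_left]
    _ ≤ e ((γ : G)⁻¹ * g) + e γ := eLpNorm_comp_mul_left_sub_le hφ.1 one_le_two _ _
    _ ≤ D * (F₀ ∪ S).sup (fun γ => e γ) + (F₀ ∪ S).sup fun γ => e γ := by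
        gcongr
        · exact (hD φ hφ _ hγg).trans (by gcongr; exact Finset.subset_union_left)
        · exact Finset.le_sup (f := fun γ : Γ => e γ) (Finset.mem_union_right _ hγS)
    _ = ((D + 1 : ℝ≥0) : ℝ≥0∞) * (F₀ ∪ S).sup fun γ => e γ := by push_cast; ring

/-- **Lemma (converse: from local spectral gap to uniform almost invariance).**
Let `Γ` be a countable dense subgroup of a locally compact second countable group `G` with left
Haar measure `mG`, and assume the left translation action `Γ ↷ (G, mG)` has local spectral gap
with respect to some compact set `B₀ ⊆ G` with non-empty interior.  Then for every compact
`K ⊆ G` there exist a finite set `F ⊆ Γ` and `κ > 0` such that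
`sup_{g ∈ K} ‖λ(g)φ - φ‖₂ ≤ κ · max_{g ∈ F} ‖λ(g)φ - φ‖₂` for every `φ ∈ L²(G)`, where
`λ` is the left regular representation `(λ(g)φ)(x) = φ(g⁻¹x)`. -/
theorem uniform_almost_invariance_of_local_spectral_gap
    (G : Type) [Group G] [TopologicalSpace G] [IsTopologicalGroup G]
    [LocallyCompactSpace G] [SecondCountableTopology G]
    [MeasurableSpace G] [BorelSpace G]
    (mG : Measure G) [mG.IsHaarMeasure]
    (Γ : Subgroup G) [Countable Γ] (hdense : Dense (Γ : Set G))
    (B₀ : Set G) (hB₀meas : MeasurableSet B₀) (hB₀comp : IsCompact B₀)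
    (hB₀int : (interior B₀).Nonempty)
    (hlsg : HasLocalSpectralGap Γ mG B₀)
    (K : Set G) (hK : IsCompact K) :
    ∃ (F : Finset Γ) (κ : ℝ≥0), 0 < κ ∧
      ∀ φ : G → ℂ, MemLp φ 2 mG → ∀ g ∈ K,
        eLpNorm (fun x => φ (g⁻¹ * x) - φ x) 2 mG ≤ (κ : ℝ≥0∞) *
          F.sup fun γ => eLpNorm (fun x => φ ((γ : G)⁻¹ * x) - φ x) 2 mG :=
  uniform_almost_invariance_of_local_spectral_gap_general G mG Γ hdense B₀ hB₀meas hB₀comp hB₀int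
    hlsg K hK
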